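/- Let 1 <= s <= t and 0 <= g <= s, and let A be the set of vertices of LeTQ(s,t) whose last s-g+t+1 bits are all 0 (the top g a-bits free). Then F_1 = N(A) is a g-good-neighbor conditional faulty set: every vertex of LeTQ(s,t) outside F_1 has at least g neighbors outside F_1. -/

import Mathlib

/-! Every vertex of `N(A)` has `b = 0`. Those with `c = 1` are `c`-flips of vertices of `A`, so
their low `s - g` `a`-bits vanish; those with `c = 0` are `a`-neighbors of vertices of `A`, and
since `a_0 = 0` there the twist is inactive, so they have at most one low `a`-bit set.

Now let `v ∉ N(A)`. If `c = 1`, the `b`-neighbors and the `c`-neighbor of `v` are `t + 1`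
vertices of which at most one has `b = 0`. If `c = 0` and `b ≠ 0`, all `s` `a`-neighbors have
`b ≠ 0`. If `v ∈ A`, its `a`-neighbors along the top `g` dimensions stay in `A`. Otherwise `v` has
two low `a`-bits set (one would put it in `N(A)`); they survive in the `a`-neighbors along the top
`g - 1` dimensions, and the `c`-neighbor of `v` has a low `a`-bit set. -/

/-- Flip bit `k` of the binary string `x`. -/
def bflip {n : ℕ} (x : Fin n → Bool) (k : Fin n) : Fin n → Bool :=
  Function.update x k (!(x k))

/-- Locally twisted cube adjacency on `n`-bit binary strings:
either flip bit `k` for some `k ≤ 1`; or, for some `k ≥ 2`, flip bits `k` and `k-1`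
when bit 0 is `1`, resp. flip only bit `k` when bit 0 is `0`. -/
def cubeAdj (n : ℕ) (x y : Fin n → Bool) : Prop :=
  (∃ k : Fin n, (k : ℕ) ≤ 1 ∧ y = bflip x k) ∨
  (∃ k : Fin n, 2 ≤ (k : ℕ) ∧
    ((∃ h0 : 0 < n, x ⟨0, h0⟩ = true ∧
        y = bflip (bflip x k) ⟨(k : ℕ) - 1, lt_of_le_of_lt (Nat.sub_le _ _) k.isLt⟩) ∨
     (∃ h0 : 0 < n, x ⟨0, h0⟩ = false ∧ y = bflip x k)))

/-- The locally twisted cube `LTQ_n`. -/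
def LTQ (n : ℕ) : SimpleGraph (Fin n → Bool) where
  Adj x y := x ≠ y ∧ (cubeAdj n x y ∨ cubeAdj n y x)
  symm := ⟨fun _ _ h => ⟨h.1.symm, h.2.symm⟩⟩
  loopless := ⟨fun _ h => h.1 rfl⟩

/-- A vertex of `LeTQ(s,t)`: the `a`-bits, the `b`-bits and the bit `c`. -/
abbrev LeTQVert (s t : ℕ) := (Fin s → Bool) × (Fin t → Bool) × Bool

/-- One-sided adjacency condition of the locally exchanged twisted cube. -/
def LeTQAdjOne (s t : ℕ) (u v : LeTQVert s t) : Prop :=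
  (u.1 = v.1 ∧ u.2.1 = v.2.1 ∧ u.2.2 = !v.2.2) ∨
  (u.2.2 = true ∧ v.2.2 = true ∧ u.1 = v.1 ∧ cubeAdj t u.2.1 v.2.1) ∨
  (u.2.2 = false ∧ v.2.2 = false ∧ u.2.1 = v.2.1 ∧ cubeAdj s u.1 v.1)

/-- The locally exchanged twisted cube `LeTQ(s,t)`. -/
def LeTQ (s t : ℕ) : SimpleGraph (LeTQVert s t) where
  Adj u v := u ≠ v ∧ (LeTQAdjOne s t u v ∨ LeTQAdjOne s t v u)
  symm := ⟨fun _ _ h => ⟨h.1.symm, h.2.symm⟩⟩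
  loopless := ⟨fun _ h => h.1 rfl⟩

/-- The open neighborhood of a vertex set. -/
def setNbhd {V : Type*} (G : SimpleGraph V) (A : Set V) : Set V :=
  {v | v ∉ A ∧ ∃ u ∈ A, G.Adj u v}

lemma SimpleGraph.le_ncard_neighborSet_diff {V : Type*} [Finite V] {G : SimpleGraph V}
    {F : Set V} {v : V} {n : ℕ} (f : Fin n → V) (hf : Function.Injective f)
    (hadj : ∀ i, G.Adj v (f i)) (hF : ∀ i, f i ∉ F) :
    n ≤ (G.neighborSet v \ F).ncard := by
  simpa using Set.ncard_le_ncard_of_injOn f (s := Set.univ) (t := G.neighborSet v \ F)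
    (fun i _ => ⟨hadj i, hF i⟩) hf.injOn

lemma Function.Injective.ite_const {α β : Type*} {p : α → Prop} [DecidablePred p] {w : β}
    {h : α → β} (hh : Function.Injective h) (hp : ∀ i j, p i → p j → i = j)
    (hw : ∀ i, h i ≠ w) : Function.Injective fun i => if p i then w else h i := by
  intro i j hij
  by_cases hi : p i <;> by_cases hj : p j <;> simp only [hi, hj, if_true, if_false] at hij
  · exact hp i j hi hj
  · exact absurd hij.symm (hw j)
  · exact absurd hij (hw i)
  · exact hh hij

section LTQ

variable {n : ℕ}

lemma bflip_apply_self (x : Fin n → Bool) (k : Fin n) : bflip x k k = !x k :=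
  Function.update_self _ _ _

lemma bflip_apply_of_ne (x : Fin n → Bool) {k j : Fin n} (h : j ≠ k) : bflip x k j = x j :=
  Function.update_of_ne h _ _

lemma bflip_bflip (x : Fin n → Bool) (k : Fin n) : bflip (bflip x k) k = x := by
  simp [bflip]

/-- Low bits of an `n`-bit string are those of small index: the string is `x (n-1) … x 0`. -/
def LowBitsZero (m : ℕ) (x : Fin n → Bool) : Prop :=
  ∀ j : Fin n, (j : ℕ) < m → x j = false

/-- Bit `0` decides the twist. -/
lemma exists_eq_bflip_of_cubeAdj {x y : Fin n → Bool} (h0 : 0 < n) (hx : x ⟨0, h0⟩ = false)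
    (h : cubeAdj n x y ∨ cubeAdj n y x) : ∃ k, y = bflip x k := by
  rcases h with (⟨k, -, hy⟩ | ⟨k, -, ⟨_, hx1, -⟩ | ⟨-, -, hy⟩⟩) |
    (⟨k, -, hx'⟩ | ⟨k, hk, ⟨_, hy1, hx'⟩ | ⟨-, -, hx'⟩⟩)
  · exact ⟨k, hy⟩
  · simp [hx] at hx1
  · exact ⟨k, hy⟩
  · exact ⟨k, by rw [hx', bflip_bflip]⟩
  · have : x ⟨0, h0⟩ = y ⟨0, h0⟩ := by
      rw [hx', bflip_apply_of_ne _ (Fin.ne_of_val_ne (by simp; omega)),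
        bflip_apply_of_ne _ (Fin.ne_of_val_ne (by simp; omega))]
    simp [hx, hy1] at this
  · exact ⟨k, by rw [hx', bflip_bflip]⟩

def ltqNeighbor (x : Fin n → Bool) (k : Fin n) : Fin n → Bool :=
  if (k : ℕ) ≤ 1 then bflip x k
  else if x ⟨0, k.pos⟩ = true then
    bflip (bflip x k) ⟨(k : ℕ) - 1, lt_of_le_of_lt (Nat.sub_le _ _) k.isLt⟩
  else bflip x k

lemma cubeAdj_ltqNeighbor (x : Fin n → Bool) (k : Fin n) : cubeAdj n x (ltqNeighbor x k) := by
  unfold ltqNeighbor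
  split_ifs with h1 h2
  · exact Or.inl ⟨k, h1, rfl⟩
  · exact Or.inr ⟨k, by omega, Or.inl ⟨k.pos, h2, rfl⟩⟩
  · exact Or.inr ⟨k, by omega, Or.inr ⟨k.pos, by simpa using h2, rfl⟩⟩

lemma ltqNeighbor_apply_of_ne_of_ne_pred (x : Fin n → Bool) {k j : Fin n} (hk : j ≠ k)
    (hk' : (j : ℕ) ≠ k - 1) : ltqNeighbor x k j = x j := by
  unfold ltqNeighbor
  split_ifs
  · exact bflip_apply_of_ne _ hk
  · rw [bflip_apply_of_ne _ (Fin.ne_of_val_ne hk'), bflip_apply_of_ne _ hk]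
  · exact bflip_apply_of_ne _ hk

lemma ltqNeighbor_apply_self (x : Fin n → Bool) (k : Fin n) : ltqNeighbor x k k = !x k := by
  unfold ltqNeighbor
  split_ifs
  · exact bflip_apply_self x k
  · rw [bflip_apply_of_ne _ (Fin.ne_of_val_ne (by simp; omega)), bflip_apply_self]
  · exact bflip_apply_self x k

lemma ltqNeighbor_ne (x : Fin n → Bool) (k : Fin n) : ltqNeighbor x k ≠ x := fun h => by
  simpa [ltqNeighbor_apply_self] using congrFun h k

lemma ltqNeighbor_injective (x : Fin n → Bool) : Function.Injective (ltqNeighbor x) := by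
  intro k k' h
  by_contra hne
  wlog hlt : (k : ℕ) < k' generalizing k k'
  · exact this h.symm (Ne.symm hne) (by omega)
  have := congrFun h k'
  rw [ltqNeighbor_apply_of_ne_of_ne_pred x (Ne.symm hne) (by omega),
    ltqNeighbor_apply_self] at this
  simp at this

lemma ltqNeighbor_eq_bflip {x : Fin n → Bool} (h0 : 0 < n) (hx : x ⟨0, h0⟩ = false)
    (k : Fin n) : ltqNeighbor x k = bflip x k := by
  simp [ltqNeighbor, hx]

lemma lowBitsZero_ltqNeighbor {m : ℕ} {x : Fin n → Bool} (hx : LowBitsZero m x) {k : Fin n}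
    (hk : m ≤ k) : LowBitsZero m (ltqNeighbor x k) := by
  intro j hj
  rw [ltqNeighbor_eq_bflip j.pos (hx _ (by simp; omega)),
    bflip_apply_of_ne _ (Fin.ne_of_val_ne (by omega))]
  exact hx j hj

end LTQ

section LeTQ

variable {s t : ℕ}

lemma LeTQ.adj_c_flip (a : Fin s → Bool) (b : Fin t → Bool) (c : Bool) :
    (LeTQ s t).Adj (a, b, c) (a, b, !c) :=
  ⟨by simp, Or.inr (Or.inl ⟨rfl, rfl, by simp⟩)⟩

lemma LeTQ.adj_ltqNeighbor_a (a : Fin s → Bool) (b : Fin t → Bool) (k : Fin s) :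
    (LeTQ s t).Adj (a, b, false) (ltqNeighbor a k, b, false) :=
  ⟨fun h => ltqNeighbor_ne a k (congrArg Prod.fst h).symm,
    Or.inl (Or.inr (Or.inr ⟨rfl, rfl, rfl, cubeAdj_ltqNeighbor a k⟩))⟩

lemma LeTQ.adj_ltqNeighbor_b (a : Fin s → Bool) (b : Fin t → Bool) (k : Fin t) :
    (LeTQ s t).Adj (a, b, true) (a, ltqNeighbor b k, true) :=
  ⟨fun h => ltqNeighbor_ne b k (congrArg (·.2.1) h).symm,
    Or.inl (Or.inr (Or.inl ⟨rfl, rfl, rfl, cubeAdj_ltqNeighbor b k⟩))⟩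

lemma LeTQ.eq_or_of_adj_of_c_false {u w : LeTQVert s t} (h : (LeTQ s t).Adj u w)
    (hu : u.2.2 = false) :
    w = (u.1, u.2.1, true) ∨ (w.2 = u.2 ∧ (cubeAdj s u.1 w.1 ∨ cubeAdj s w.1 u.1)) := by
  obtain ⟨u₁, u₂, u₃⟩ := u
  obtain ⟨w₁, w₂, w₃⟩ := w
  subst hu
  rcases h.2 with (⟨h₁, h₂, h₃⟩ | ⟨h, -⟩ | ⟨-, h₃, h₂, h⟩) |
    (⟨h₁, h₂, h₃⟩ | ⟨-, h, -⟩ | ⟨h₃, -, h₂, h⟩)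
  · simp_all
  · simp at h
  · simp_all
  · simp_all
  · simp at h
  · simp_all

def trailingZeroSet (s t m : ℕ) : Set (LeTQVert s t) :=
  {u | LowBitsZero m u.1 ∧ (∀ j : Fin t, u.2.1 j = false) ∧ u.2.2 = false}

variable {m : ℕ}

lemma exists_of_mem_setNbhd_trailingZeroSet {w : LeTQVert s t}
    (hw : w ∈ setNbhd (LeTQ s t) (trailingZeroSet s t m)) :
    ∃ u ∈ trailingZeroSet s t m,
      w = (u.1, u.2.1, true) ∨ (w.2 = u.2 ∧ (cubeAdj s u.1 w.1 ∨ cubeAdj s w.1 u.1)) := by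
  obtain ⟨-, u, hu, huw⟩ := hw
  exact ⟨u, hu, LeTQ.eq_or_of_adj_of_c_false huw hu.2.2⟩

lemma not_mem_setNbhd_of_b (a : Fin s → Bool) {b : Fin t → Bool} (c : Bool) {j : Fin t}
    (hb : b j = true) : (a, b, c) ∉ setNbhd (LeTQ s t) (trailingZeroSet s t m) := by
  intro hw
  obtain ⟨u, ⟨-, hu, -⟩, h | ⟨h, -⟩⟩ := exists_of_mem_setNbhd_trailingZeroSet hw
  · simp_all [Prod.ext_iff]
  · simp_all [Prod.ext_iff]

lemma not_mem_setNbhd_of_c_true {a : Fin s → Bool} (b : Fin t → Bool) {j : Fin s}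
    (hj : (j : ℕ) < m) (ha : a j = true) :
    (a, b, true) ∉ setNbhd (LeTQ s t) (trailingZeroSet s t m) := by
  intro hw
  obtain ⟨u, ⟨hu, -, hu₃⟩, h | ⟨h, -⟩⟩ := exists_of_mem_setNbhd_trailingZeroSet hw
  · simp only [Prod.ext_iff] at h
    simp [h.1, hu j hj] at ha
  · simp [Prod.ext_iff, hu₃] at h

lemma not_mem_setNbhd_of_two_low_ones {a : Fin s → Bool} (b : Fin t → Bool) {j₁ j₂ : Fin s}
    (hne : j₁ ≠ j₂) (hj₁ : (j₁ : ℕ) < m) (hj₂ : (j₂ : ℕ) < m) (ha₁ : a j₁ = true)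
    (ha₂ : a j₂ = true) : (a, b, false) ∉ setNbhd (LeTQ s t) (trailingZeroSet s t m) := by
  intro hw
  obtain ⟨u, ⟨hu, -⟩, h | ⟨-, hadj⟩⟩ := exists_of_mem_setNbhd_trailingZeroSet hw
  · simp [Prod.ext_iff] at h
  obtain ⟨k, hk : a = bflip u.1 k⟩ :=
    exists_eq_bflip_of_cubeAdj j₁.pos (hu _ (by simp; omega)) hadj
  have low_one_eq : ∀ j : Fin s, (j : ℕ) < m → a j = true → j = k := fun j hj ha => by
    by_contra hjk
    simp [hk, bflip_apply_of_ne _ hjk, hu j hj] at ha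
  exact hne ((low_one_eq j₁ hj₁ ha₁).trans (low_one_eq j₂ hj₂ ha₂).symm)

lemma mem_setNbhd_of_unique_low_one {a : Fin s → Bool} {b : Fin t → Bool}
    (hb : ∀ j, b j = false) {j₁ : Fin s} (hj₁ : (j₁ : ℕ) < m) (ha₁ : a j₁ = true)
    (hunique : ∀ j : Fin s, (j : ℕ) < m → a j = true → j = j₁) :
    (a, b, false) ∈ setNbhd (LeTQ s t) (trailingZeroSet s t m) := by
  have hlow : LowBitsZero m (bflip a j₁) := fun j hj => by
    rcases eq_or_ne j j₁ with rfl | hne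
    · simp [bflip_apply_self, ha₁]
    · rw [bflip_apply_of_ne _ hne]
      by_contra ha
      exact hne (hunique j hj (by simpa using ha))
  have hnbr : ltqNeighbor (bflip a j₁) j₁ = a := by
    rw [ltqNeighbor_eq_bflip j₁.pos (hlow _ (by simp; omega)), bflip_bflip]
  refine ⟨fun ha => by simpa [ha₁] using ha.1 j₁ hj₁, (bflip a j₁, b, false), ⟨hlow, hb, rfl⟩, ?_⟩
  simpa [hnbr] using LeTQ.adj_ltqNeighbor_a (bflip a j₁) b j₁

lemma lowBitsZero_or_two_low_ones {a : Fin s → Bool} {b : Fin t → Bool}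
    (hb : ∀ j, b j = false) (h : (a, b, false) ∉ setNbhd (LeTQ s t) (trailingZeroSet s t m)) :
    LowBitsZero m a ∨ ∃ j₁ j₂ : Fin s, j₁ ≠ j₂ ∧ (j₁ : ℕ) < m ∧ (j₂ : ℕ) < m ∧
      a j₁ = true ∧ a j₂ = true := by
  by_contra! hcon
  obtain ⟨hA, htwo⟩ := hcon
  obtain ⟨j₁, hj₁, ha₁⟩ : ∃ j₁ : Fin s, (j₁ : ℕ) < m ∧ a j₁ = true := by
    simpa [LowBitsZero] using hA
  refine h (mem_setNbhd_of_unique_low_one hb hj₁ ha₁ fun j hj ha => ?_)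
  by_contra hne
  exact htwo j j₁ hne hj hj₁ ha ha₁

end LeTQ

section GoodNeighbors

variable {s t m : ℕ}

lemma le_ncard_neighborSet_diff_of_c_true (a : Fin s → Bool) (b : Fin t → Bool) :
    t ≤ ((LeTQ s t).neighborSet (a, b, true) \
      setNbhd (LeTQ s t) (trailingZeroSet s t m)).ncard := by
  classical
  refine SimpleGraph.le_ncard_neighborSet_diff
    (fun k => if ltqNeighbor b k = fun _ => false then (a, b, false)
      else (a, ltqNeighbor b k, true))
    (Function.Injective.ite_const ?_ ?_ ?_) (fun k => ?_) (fun k => ?_)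
  · exact fun _ _ h => ltqNeighbor_injective b (congrArg (·.2.1) h)
  · exact fun _ _ hk hk' => ltqNeighbor_injective b (hk.trans hk'.symm)
  · simp
  · split_ifs
    · simpa using LeTQ.adj_c_flip a b true
    · exact LeTQ.adj_ltqNeighbor_b a b k
  · split_ifs with hk
    · refine not_mem_setNbhd_of_b a false (j := k) ?_
      simpa [ltqNeighbor_apply_self] using congrFun hk k
    · obtain ⟨j, hj⟩ : ∃ j, ltqNeighbor b k j = true := by
        by_contra! h
        exact hk (funext fun j => by simpa using h j)
      exact not_mem_setNbhd_of_b a true hj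

lemma le_ncard_neighborSet_diff_of_b {a : Fin s → Bool} {b : Fin t → Bool} {j : Fin t}
    (hb : b j = true) :
    s ≤ ((LeTQ s t).neighborSet (a, b, false) \
      setNbhd (LeTQ s t) (trailingZeroSet s t m)).ncard :=
  SimpleGraph.le_ncard_neighborSet_diff (fun k => (ltqNeighbor a k, b, false))
    (fun _ _ h => ltqNeighbor_injective a (congrArg Prod.fst h))
    (LeTQ.adj_ltqNeighbor_a a b) (fun _ => not_mem_setNbhd_of_b _ false hb)

lemma le_ncard_neighborSet_diff_of_mem {a : Fin s → Bool} {b : Fin t → Bool}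
    (ha : LowBitsZero m a) (hb : ∀ j, b j = false) :
    s - m ≤ ((LeTQ s t).neighborSet (a, b, false) \
      setNbhd (LeTQ s t) (trailingZeroSet s t m)).ncard :=
  SimpleGraph.le_ncard_neighborSet_diff
    (fun i : Fin (s - m) => (ltqNeighbor a ⟨m + i, by omega⟩, b, false))
    (fun i i' h => by simpa [Fin.ext_iff] using ltqNeighbor_injective a (congrArg Prod.fst h))
    (fun _ => LeTQ.adj_ltqNeighbor_a a b _)
    (fun _ hw => hw.1 ⟨lowBitsZero_ltqNeighbor ha (by simp), hb, rfl⟩)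

lemma le_ncard_neighborSet_diff_of_two_low_ones {a : Fin s → Bool} (b : Fin t → Bool)
    {j₁ j₂ : Fin s} (hne : j₁ ≠ j₂) (hj₁ : (j₁ : ℕ) < m) (hj₂ : (j₂ : ℕ) < m)
    (ha₁ : a j₁ = true) (ha₂ : a j₂ = true) :
    s - m ≤ ((LeTQ s t).neighborSet (a, b, false) \
      setNbhd (LeTQ s t) (trailingZeroSet s t m)).ncard := by
  classical
  -- the twist along dimension `k` may also flip bit `k - 1`, so only `k > m` is safe
  have high_low_bit : ∀ (i : Fin (s - m)) (j : Fin s), (j : ℕ) < m →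
      ltqNeighbor a ⟨m + i, by omega⟩ j = a j ∨ (i : ℕ) = 0 := fun i j hj => by
    rcases Nat.eq_zero_or_pos (i : ℕ) with h | h
    · exact Or.inr h
    · exact Or.inl (ltqNeighbor_apply_of_ne_of_ne_pred a (Fin.ne_of_val_ne (by simp; omega))
        (by simp; omega))
  refine SimpleGraph.le_ncard_neighborSet_diff
    (fun i : Fin (s - m) => if (i : ℕ) = 0 then (a, b, true)
      else (ltqNeighbor a ⟨m + i, by omega⟩, b, false))
    (Function.Injective.ite_const ?_ (fun i i' hi hi' => Fin.ext (hi.trans hi'.symm)) (by simp))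
    (fun i => ?_) (fun i => ?_)
  · exact fun i i' h => by
      simpa [Fin.ext_iff] using ltqNeighbor_injective a (congrArg Prod.fst h)
  · split_ifs
    · simpa using LeTQ.adj_c_flip a b false
    · exact LeTQ.adj_ltqNeighbor_a a b _
  · split_ifs with hi
    · exact not_mem_setNbhd_of_c_true b hj₁ ha₁
    · refine not_mem_setNbhd_of_two_low_ones b hne hj₁ hj₂ ?_ ?_
      · simpa [hi, ha₁] using high_low_bit i j₁ hj₁
      · simpa [hi, ha₂] using high_low_bit i j₂ hj₂

end GoodNeighbors

theorem stmt10_general (s t g : ℕ) (hst : s ≤ t) (hg : g ≤ s) :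
    let A : Set (LeTQVert s t) :=
      {u | (∀ j : Fin s, (j : ℕ) < s - g → u.1 j = false) ∧
           (∀ j : Fin t, u.2.1 j = false) ∧ u.2.2 = false}
    ∀ v ∉ setNbhd (LeTQ s t) A,
      g ≤ ((LeTQ s t).neighborSet v \ setNbhd (LeTQ s t) A).ncard := by
  intro A v hv
  change v ∉ setNbhd (LeTQ s t) (trailingZeroSet s t (s - g)) at hv
  change g ≤ ((LeTQ s t).neighborSet v \
    setNbhd (LeTQ s t) (trailingZeroSet s t (s - g))).ncard
  obtain ⟨a, b, _ | _⟩ := v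
  · by_cases hb : ∀ j, b j = false
    · rcases lowBitsZero_or_two_low_ones hb hv with ha | ⟨j₁, j₂, hne, hj₁, hj₂, ha₁, ha₂⟩
      · have := le_ncard_neighborSet_diff_of_mem ha hb (t := t)
        omega
      · have := le_ncard_neighborSet_diff_of_two_low_ones b hne hj₁ hj₂ ha₁ ha₂
        omega
    · obtain ⟨j, hj⟩ : ∃ j, b j = true := by simpa using hb
      exact hg.trans (le_ncard_neighborSet_diff_of_b hj)
  · exact (hg.trans hst).trans (le_ncard_neighborSet_diff_of_c_true a b)

/-- F1 = N(A) is a g-good-neighbor conditional faulty set. -/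
theorem stmt10 (s t g : ℕ) (hs : 1 ≤ s) (hst : s ≤ t) (hg : g ≤ s) :
    let A : Set (LeTQVert s t) :=
      {u | (∀ j : Fin s, (j : ℕ) < s - g → u.1 j = false) ∧
           (∀ j : Fin t, u.2.1 j = false) ∧ u.2.2 = false}
    ∀ v ∉ setNbhd (LeTQ s t) A,
      g ≤ ((LeTQ s t).neighborSet v \ setNbhd (LeTQ s t) A).ncard :=
  stmt10_general s t g hst hg
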